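/- arXiv:1901.08156 — 6 statements merged into one kernel-verified Lean document; each statement's English description precedes it below -/
import Mathlib

section
/- Let n ≥ 1 and let w_1 ≥ w_2 ≥ ... ≥ w_n be real numbers. Let p(x) = ∏_{k=1}^{n} (x - w_k) and let P be any real-polynomial antiderivative of p (i.e. P' = p). Then there exists a real number c such that P(x) - c has all of its complex roots real if and only if max{P(w_k) : 1 ≤ k ≤ n, k odd} ≤ min{P(w_k) : 1 ≤ k ≤ n, k even} (with the convention that an empty max is -∞ and an empty min is +∞). -/
/-!
Every `Q = P - c` has `Q' = p`, so it suffices to show that such a `Q` is hyperbolic exactly when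
`(-1)^m Q(w_m) ≥ 0` for all `m`; the largest odd-indexed value `P(w_k)` is then a valid `c`.

If `Q` is hyperbolic and `Q(w_m) ≠ 0`, Rolle's theorem on `(w_m, ∞)` and on `(-∞, w_m)` bounds the
roots of `Q` there by the roots of `p` plus one, that is by `m` and by `n - m + 1`. These bounds add
up to `deg Q = n + 1`, so exactly `m` roots of `Q` exceed `w_m`, which fixes the sign of `Q(w_m)`.

Conversely, the alternating signs give, by the intermediate value theorem, roots
`s_k ∈ [w_{k+1}, w_k]` of `Q` for `0 ≤ k ≤ n` (with `w_0 = +∞`, `w_{n+1} = -∞`). If `j` of them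
coincide with a value `a`, then `a` is a root of `p` of multiplicity at least `j - 1`, hence of `Q`
of multiplicity at least `j`; so `Q` has `n + 1` real roots counted with multiplicity.
-/

open Polynomial

/-- A real polynomial is hyperbolic if all of its complex roots are real. -/
def Hyperbolic (p : Polynomial ℝ) : Prop :=
  ∀ z ∈ (p.map (algebraMap ℝ ℂ)).roots, z.im = 0

theorem Multiset.neg_one_pow_card_filter_lt_mul_prod_map_sub_pos {x : ℝ} (s : Multiset ℝ)
    (hx : x ∉ s) : 0 < (-1) ^ Multiset.card (s.filter (x < ·)) * (s.map (x - ·)).prod := by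
  induction s using Multiset.induction_on with
  | empty => simp
  | cons r s ih =>
    rw [Multiset.mem_cons, not_or] at hx
    have ih := ih hx.2
    rcases lt_or_gt_of_ne hx.1 with hxr | hrx
    · rw [Multiset.filter_cons_of_pos _ hxr, Multiset.card_cons, Multiset.map_cons,
        Multiset.prod_cons, pow_succ]
      nlinarith
    · rw [Multiset.filter_cons_of_neg _ hrx.not_gt, Multiset.map_cons, Multiset.prod_cons]
      nlinarith

namespace Polynomial

theorem hyperbolic_iff_card_roots (q : ℝ[X]) :
    Hyperbolic q ↔ Multiset.card q.roots = q.natDegree := by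
  have hinj : Function.Injective (algebraMap ℝ ℂ) := (algebraMap ℝ ℂ).injective
  constructor
  · intro hq
    classical
    have hreal : ∀ z ∈ (q.map (algebraMap ℝ ℂ)).roots, z ∈ (algebraMap ℝ ℂ).range :=
      fun z hz => ⟨z.re, Complex.ext rfl (hq z hz).symm⟩
    rw [← Multiset.card_map (algebraMap ℝ ℂ), ← filter_roots_map_range_eq_map_roots hinj,
      Multiset.filter_eq_self.2 hreal, IsAlgClosed.card_roots_map_eq_natDegree_of_injective q hinj]
  · intro hq z hz
    rw [(splits_iff_card_roots.2 hq).roots_map_of_injective hinj] at hz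
    obtain ⟨r, -, rfl⟩ := Multiset.mem_map.1 hz
    exact Complex.ofReal_im r

theorem card_roots_toFinset_filter_le_derivative_sdiff_succ (p : ℝ[X]) (S : Set ℝ) [S.OrdConnected]
    [DecidablePred (· ∈ S)] :
    (p.roots.toFinset.filter (· ∈ S)).card ≤
      (p.derivative.roots.toFinset.filter (· ∈ S) \ p.roots.toFinset.filter (· ∈ S)).card + 1 := by
  rcases eq_or_ne (derivative p) 0 with hp' | hp'
  · rw [eq_C_of_derivative_eq_zero hp']
    simp
  have hp : p ≠ 0 := ne_of_apply_ne derivative (by rwa [derivative_zero])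
  refine Finset.card_le_sdiff_of_interleaved fun x hx y hy hxy _ => ?_
  simp only [Finset.mem_filter, Multiset.mem_toFinset, mem_roots hp] at hx hy
  obtain ⟨z, hz, hz'⟩ := exists_deriv_eq_zero hxy p.continuousOn (hx.1.trans hy.1.symm)
  refine ⟨z, ?_, hz⟩
  rw [Finset.mem_filter, Multiset.mem_toFinset, mem_roots hp', IsRoot, ← p.deriv]
  exact ⟨hz', Set.OrdConnected.out ‹_› hx.2 hy.2 (Set.Ioo_subset_Icc_self hz)⟩

theorem card_roots_filter_le_derivative (p : ℝ[X]) (S : Set ℝ) [S.OrdConnected]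
    [DecidablePred (· ∈ S)] :
    Multiset.card (p.roots.filter (· ∈ S)) ≤
      Multiset.card (p.derivative.roots.filter (· ∈ S)) + 1 := by
  set A := p.roots.toFinset.filter (· ∈ S)
  set D := p.derivative.roots.toFinset.filter (· ∈ S)
  set M := p.derivative.roots.filter (· ∈ S)
  have hcount : ∀ x ∈ A, M.count x = p.derivative.rootMultiplicity x := fun x hx => by
    rw [Multiset.count_filter_of_pos (Finset.mem_filter.1 hx).2, count_roots]
  calc Multiset.card (p.roots.filter (· ∈ S))
      = ∑ x ∈ A, p.rootMultiplicity x := by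
        rw [← Multiset.sum_count_eq_card (s := A) fun x hx => by simpa [A] using hx]
        refine Finset.sum_congr rfl fun x hx => ?_
        rw [Multiset.count_filter_of_pos (Finset.mem_filter.1 hx).2, count_roots]
    _ ≤ ∑ x ∈ A, (M.count x + 1) := Finset.sum_le_sum fun x _ => by
        have := rootMultiplicity_sub_one_le_derivative_rootMultiplicity p x
        rw [hcount x ‹_›]
        omega
    _ ≤ ∑ x ∈ A, M.count x + ((D \ A).card + 1) := by
        rw [Finset.sum_add_distrib, Finset.sum_const, smul_eq_mul, mul_one]
        gcongr
        exact card_roots_toFinset_filter_le_derivative_sdiff_succ p S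
    _ ≤ ∑ x ∈ A, M.count x + (∑ x ∈ D \ A, M.count x + 1) := by
        gcongr
        rw [Finset.card_eq_sum_ones]
        refine Finset.sum_le_sum fun x hx => Multiset.count_pos.2 ?_
        simpa [D, M] using (Finset.mem_sdiff.1 hx).1
    _ = Multiset.card M + 1 := by
        rw [← add_assoc, ← Finset.sum_union Finset.disjoint_sdiff, Finset.union_sdiff_self_eq_union,
          Multiset.sum_count_eq_card fun x hx =>
            Finset.mem_union_right _ (by simpa [D, M] using hx)]

theorem leadingCoeff_mul_neg_one_pow_mul_eval_pos {q : ℝ[X]} {x : ℝ}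
    (hq : Multiset.card q.roots = q.natDegree) (hx : ¬ q.IsRoot x) :
    0 < q.leadingCoeff * ((-1) ^ Multiset.card (q.roots.filter (x < ·)) * q.eval x) := by
  have hq0 : q ≠ 0 := by rintro rfl; simp at hx
  have heval : q.eval x = q.leadingCoeff * (q.roots.map (x - ·)).prod := by
    conv_lhs => rw [← C_leadingCoeff_mul_prod_multiset_X_sub_C hq]
    simp [eval_multiset_prod, Multiset.map_map]
  have hpos := q.roots.neg_one_pow_card_filter_lt_mul_prod_map_sub_pos
    (x := x) fun h => hx ((mem_roots hq0).1 h)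
  have hlc : q.leadingCoeff ≠ 0 := leadingCoeff_ne_zero.2 hq0
  rw [heval]
  calc 0 < q.leadingCoeff ^ 2 * ((-1) ^ _ * (q.roots.map (x - ·)).prod) := by positivity
    _ = _ := by ring

theorem exists_isRoot_mem_Icc_of_eval_mul_eval_nonpos (q : ℝ[X]) {a b : ℝ} (hab : a ≤ b)
    (h : q.eval a * q.eval b ≤ 0) : ∃ s ∈ Set.Icc a b, q.IsRoot s := by
  have h0 : (0 : ℝ) ∈ Set.uIcc (q.eval a) (q.eval b) := by
    rcases mul_nonpos_iff.1 h with h | h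
    · exact Set.mem_uIcc.2 (Or.inr ⟨h.2, h.1⟩)
    · exact Set.mem_uIcc.2 (Or.inl ⟨h.1, h.2⟩)
  rw [← Set.uIcc_of_le hab]
  exact intermediate_value_uIcc q.continuousOn h0

theorem exists_isRoot_ge_of_leadingCoeff_mul_eval_nonpos {q : ℝ[X]} {x : ℝ} (hq : 0 < q.degree)
    (hx : q.leadingCoeff * q.eval x ≤ 0) : ∃ s, x ≤ s ∧ q.IsRoot s := by
  have hlc : q.leadingCoeff ≠ 0 := leadingCoeff_ne_zero.2 (ne_zero_of_degree_gt hq)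
  obtain ⟨b, hxb, hb⟩ : ∃ b, x ≤ b ∧ q.eval x * q.eval b ≤ 0 := by
    rcases hlc.lt_or_gt with hlc | hlc
    · obtain ⟨b, hb, hxb⟩ := ((tendsto_atBot_of_leadingCoeff_nonpos q hq hlc.le).eventually_le_atBot
        0 |>.and (Filter.eventually_ge_atTop x)).exists
      exact ⟨b, hxb, by nlinarith⟩
    · obtain ⟨b, hb, hxb⟩ := ((tendsto_atTop_of_leadingCoeff_nonneg q hq hlc.le).eventually_ge_atTop
        0 |>.and (Filter.eventually_ge_atTop x)).exists
      exact ⟨b, hxb, by nlinarith⟩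
  obtain ⟨s, hs, hroot⟩ := q.exists_isRoot_mem_Icc_of_eval_mul_eval_nonpos hxb hb
  exact ⟨s, hs.1, hroot⟩

theorem exists_isRoot_le_of_neg_one_pow_mul_leadingCoeff_mul_eval_nonpos {q : ℝ[X]} {x : ℝ}
    (hq : 0 < q.degree)
    (hx : (-1) ^ q.natDegree * q.leadingCoeff * q.eval x ≤ 0) : ∃ s, s ≤ x ∧ q.IsRoot s := by
  have hd : q.natDegree ≠ 0 := (natDegree_pos_iff_degree_pos.2 hq).ne'
  have hneg : (-X : ℝ[X]).natDegree ≠ 0 := by simp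
  obtain ⟨s, hs, hroot⟩ := exists_isRoot_ge_of_leadingCoeff_mul_eval_nonpos (q := q.comp (-X))
    (x := -x) (by rw [← natDegree_pos_iff_degree_pos, natDegree_comp]; simp; omega)
    (by rw [leadingCoeff_comp hneg]; simpa [mul_comm] using hx)
  exact ⟨-s, by linarith, by simpa using hroot⟩

theorem natDegree_eq_natDegree_derivative_add_one {R : Type*} [Semiring R] [IsAddTorsionFree R]
    {q : R[X]} (h : q.derivative ≠ 0) : q.natDegree = q.derivative.natDegree + 1 := by
  have := derivative_ne_zero.1 h
  rw [natDegree_derivative]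
  omega

theorem leadingCoeff_pos_of_monic_derivative {q : ℝ[X]} (h : q.derivative.Monic) :
    0 < q.leadingCoeff := by
  have h1 := h.leadingCoeff
  rw [leadingCoeff_derivative] at h1
  have hd : (0 : ℝ) ≤ q.natDegree := Nat.cast_nonneg _
  nlinarith

theorem roots_finset_prod_X_sub_C {R ι : Type*} [CommRing R] [IsDomain R] (s : Finset ι)
    (f : ι → R) : (∏ i ∈ s, (X - C (f i))).roots = s.val.map f := by
  rw [Finset.prod_eq_multiset_prod, ← roots_multiset_prod_X_sub_C (s.val.map f), Multiset.map_map]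
  rfl

end Polynomial

section CriticalPoints

open Finset

variable {n : ℕ} {w : ℕ → ℝ} {Q : ℝ[X]}

theorem AntitoneOn.card_filter_map_Icc_gt_le (hw : AntitoneOn w (Set.Icc 1 n)) {m : ℕ}
    (hm : m ∈ Icc 1 n) :
    Multiset.card (((Icc 1 n).val.map w).filter (w m < ·)) ≤ m - 1 := by
  rw [Multiset.filter_map, Multiset.card_map, ← Nat.card_Ico]
  refine card_le_card (s := (Icc 1 n).filter (fun j => w m < w j)) fun j hj => ?_
  obtain ⟨hj, hwj⟩ := mem_filter.1 hj
  rw [mem_Icc] at hj hm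
  refine mem_Ico.2 ⟨hj.1, lt_of_not_ge fun hmj => ?_⟩
  exact (hw hm hj hmj).not_gt hwj

theorem AntitoneOn.card_filter_map_Icc_lt_le (hw : AntitoneOn w (Set.Icc 1 n)) {m : ℕ}
    (hm : m ∈ Icc 1 n) :
    Multiset.card (((Icc 1 n).val.map w).filter (· < w m)) ≤ n - m := by
  rw [Multiset.filter_map, Multiset.card_map, ← Nat.card_Ioc]
  refine card_le_card (s := (Icc 1 n).filter (fun j => w j < w m)) fun j hj => ?_
  obtain ⟨hj, hwj⟩ := mem_filter.1 hj
  rw [mem_Icc] at hj hm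
  refine mem_Ioc.2 ⟨lt_of_not_ge fun hjm => ?_, hj.2⟩
  exact (hw hj hm hjm).not_gt hwj

theorem natDegree_eq_and_leadingCoeff_pos_of_derivative_eq_prod
    (hQ : Q.derivative = ∏ k ∈ Icc 1 n, (X - C (w k))) :
    Q.natDegree = n + 1 ∧ 0 < Q.leadingCoeff := by
  have hmonic : Q.derivative.Monic := hQ ▸ monic_prod_of_monic _ _ fun k _ => monic_X_sub_C (w k)
  refine ⟨?_, leadingCoeff_pos_of_monic_derivative hmonic⟩
  rw [natDegree_eq_natDegree_derivative_add_one hmonic.ne_zero, hQ,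
    natDegree_prod_of_monic _ _ fun k _ => monic_X_sub_C (w k)]
  simp

theorem neg_one_pow_mul_eval_nonneg_of_hyperbolic (hw : AntitoneOn w (Set.Icc 1 n))
    (hQ : Q.derivative = ∏ k ∈ Icc 1 n, (X - C (w k))) (hhyp : Hyperbolic Q) {m : ℕ}
    (hm : m ∈ Icc 1 n) : 0 ≤ (-1) ^ m * Q.eval (w m) := by
  by_cases hroot : Q.IsRoot (w m)
  · simp [hroot.eq_zero]
  obtain ⟨hdeg, hlc⟩ := natDegree_eq_and_leadingCoeff_pos_of_derivative_eq_prod hQ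
  have hcard := (hyperbolic_iff_card_roots Q).1 hhyp
  have hroots : Q.derivative.roots = (Icc 1 n).val.map w := by rw [hQ, roots_finset_prod_X_sub_C]
  have hrolle_above := Q.card_roots_filter_le_derivative (Set.Ioi (w m))
  have hrolle_below := Q.card_roots_filter_le_derivative (Set.Iio (w m))
  simp only [Set.mem_Ioi, Set.mem_Iio, hroots] at hrolle_above hrolle_below
  have hnot : Q.roots.filter (fun r => ¬ w m < r) = Q.roots.filter (· < w m) :=
    Multiset.filter_congr fun r hr => by
      have : r ≠ w m := fun h => hroot (h ▸ isRoot_of_mem_roots hr)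
      exact ⟨fun h => lt_of_le_of_ne (not_lt.1 h) this, lt_asymm⟩
  have hsplit : Multiset.card (Q.roots.filter (w m < ·)) + Multiset.card (Q.roots.filter (· < w m))
      = n + 1 := by
    rw [← hdeg, ← hcard, ← hnot, ← Multiset.card_add, Multiset.filter_add_not]
  have hm' := mem_Icc.1 hm
  have hcard_above : Multiset.card (Q.roots.filter (w m < ·)) = m := by
    have := hw.card_filter_map_Icc_gt_le hm
    have := hw.card_filter_map_Icc_lt_le hm
    omega
  have := leadingCoeff_mul_neg_one_pow_mul_eval_pos hcard hroot
  rw [hcard_above] at this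
  exact (pos_of_mul_pos_right this hlc.le).le

-- If `s k = a` for some `k` above the least such index `k₀`, then
-- `a = s k ≤ w k ≤ w (k₀ + 1) ≤ s k₀ = a`.
theorem card_filter_eq_le_card_filter_eq_add_one (hw : AntitoneOn w (Set.Icc 1 n)) {s : ℕ → ℝ}
    (hs_le : ∀ k ≤ n, 1 ≤ k → s k ≤ w k) (hs_ge : ∀ k ≤ n, k < n → w (k + 1) ≤ s k) (a : ℝ) :
    #((range (n + 1)).filter (a = s ·)) ≤ #((Icc 1 n).filter (a = w ·)) + 1 := by
  set T := (range (n + 1)).filter (a = s ·)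
  rcases T.eq_empty_or_nonempty with hT | hT
  · simp [hT]
  set k₀ := T.min' hT
  obtain ⟨hk₀, hsk₀⟩ := mem_filter.1 (T.min'_mem hT)
  have hsub : T.erase k₀ ⊆ (Icc 1 n).filter (a = w ·) := by
    intro k hk
    obtain ⟨hkk₀, hkT⟩ := mem_erase.1 hk
    obtain ⟨hk, hsk⟩ := mem_filter.1 hkT
    have hlt : k₀ < k := lt_of_le_of_ne (T.min'_le k hkT) (Ne.symm hkk₀)
    rw [mem_range] at hk hk₀
    have hkI : k ∈ Icc 1 n := mem_Icc.2 ⟨by omega, by omega⟩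
    have hwk : w k ≤ w (k₀ + 1) :=
      hw (a := k₀ + 1) ⟨by omega, by omega⟩ (Set.mem_Icc.2 (mem_Icc.1 hkI)) (by omega)
    refine mem_filter.2 ⟨hkI, le_antisymm ?_ ?_⟩
    · exact hsk ▸ hs_le k (by omega) (by omega)
    · exact hsk₀ ▸ hwk.trans (hs_ge k₀ (by omega) (by omega))
  calc #T = #(T.erase k₀) + 1 := (card_erase_add_one (T.min'_mem hT)).symm
    _ ≤ _ := by gcongr

theorem le_card_roots_of_interlacing (hw : AntitoneOn w (Set.Icc 1 n))
    (hQ : Q.derivative = ∏ k ∈ Icc 1 n, (X - C (w k))) {s : ℕ → ℝ}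
    (hroot : ∀ k ≤ n, Q.IsRoot (s k)) (hs_le : ∀ k ≤ n, 1 ≤ k → s k ≤ w k)
    (hs_ge : ∀ k ≤ n, k < n → w (k + 1) ≤ s k) : n + 1 ≤ Multiset.card Q.roots := by
  have hQ0 : Q ≠ 0 := by
    rintro rfl
    exact (monic_prod_of_monic _ _ fun k _ => monic_X_sub_C (w k)).ne_zero
      (by rw [← hQ, derivative_zero])
  have hle : (range (n + 1)).val.map s ≤ Q.roots := Multiset.le_iff_count.2 fun a => by
    rw [Multiset.count_map, count_roots]
    change #((range (n + 1)).filter (a = s ·)) ≤ _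
    rcases ((range (n + 1)).filter (a = s ·)).eq_empty_or_nonempty with h | ⟨k, hk⟩
    · simp [h]
    obtain ⟨hkn, rfl⟩ := mem_filter.1 hk
    have hQk := hroot k (Nat.lt_succ_iff.1 (mem_range.1 hkn))
    have hmult := derivative_rootMultiplicity_of_root hQk
    have hpos := (rootMultiplicity_pos hQ0).2 hQk
    rw [← count_roots, hQ, roots_finset_prod_X_sub_C, Multiset.count_map] at hmult
    change #((Icc 1 n).filter (s k = w ·)) = _ at hmult
    have := card_filter_eq_le_card_filter_eq_add_one hw hs_le hs_ge (s k)
    omega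
  simpa using Multiset.card_le_card hle

-- The bound that would involve `w 0` or `w (n + 1)` is dropped: read them as `+∞` and `-∞`.
theorem exists_isRoot_interlacing (hn : 1 ≤ n) (hw : AntitoneOn w (Set.Icc 1 n))
    (hQ : Q.derivative = ∏ k ∈ Icc 1 n, (X - C (w k)))
    (halt : ∀ m ∈ Icc 1 n, 0 ≤ (-1) ^ m * Q.eval (w m)) {k : ℕ} (hk : k ≤ n) :
    ∃ s, Q.IsRoot s ∧ (1 ≤ k → s ≤ w k) ∧ (k < n → w (k + 1) ≤ s) := by
  obtain ⟨hdeg, hlc⟩ := natDegree_eq_and_leadingCoeff_pos_of_derivative_eq_prod hQ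
  have hdeg' : 0 < Q.degree := natDegree_pos_iff_degree_pos.1 (by omega)
  rcases Nat.eq_zero_or_pos k with rfl | hk₀
  · have h1 := halt 1 (mem_Icc.2 ⟨le_rfl, hn⟩)
    obtain ⟨s, hs, hroot⟩ := exists_isRoot_ge_of_leadingCoeff_mul_eval_nonpos hdeg' (x := w 1)
      (by nlinarith)
    exact ⟨s, hroot, by omega, fun _ => hs⟩
  rcases hk.lt_or_eq with hkn | rfl
  · have h1 := halt k (mem_Icc.2 ⟨hk₀, hk⟩)
    have h2 := halt (k + 1) (mem_Icc.2 ⟨by omega, hkn⟩)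
    have hsign : (-1 : ℝ) ^ (k + 1) * (-1) ^ k = -1 := by
      rw [← pow_add]
      exact Odd.neg_one_pow ⟨k, by ring⟩
    obtain ⟨s, hs, hroot⟩ := Q.exists_isRoot_mem_Icc_of_eval_mul_eval_nonpos
      (hw ⟨by omega, hk⟩ ⟨by omega, hkn⟩ (Nat.le_succ k))
      (by nlinarith [mul_nonneg h1 h2])
    exact ⟨s, hroot, fun _ => hs.2, fun _ => hs.1⟩
  · have h1 := halt k (mem_Icc.2 ⟨hk₀, le_rfl⟩)
    obtain ⟨s, hs, hroot⟩ :=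
      exists_isRoot_le_of_neg_one_pow_mul_leadingCoeff_mul_eval_nonpos hdeg' (x := w k)
      (by rw [hdeg, pow_succ]; nlinarith)
    exact ⟨s, hroot, fun _ => hs, by omega⟩

theorem hyperbolic_of_neg_one_pow_mul_eval_nonneg (hn : 1 ≤ n) (hw : AntitoneOn w (Set.Icc 1 n))
    (hQ : Q.derivative = ∏ k ∈ Icc 1 n, (X - C (w k)))
    (halt : ∀ m ∈ Icc 1 n, 0 ≤ (-1) ^ m * Q.eval (w m)) : Hyperbolic Q := by
  choose! s hroot hs_le hs_ge using fun k (hk : k ≤ n) => exists_isRoot_interlacing hn hw hQ halt hk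
  rw [hyperbolic_iff_card_roots]
  refine le_antisymm (card_roots' Q) ?_
  rw [(natDegree_eq_and_leadingCoeff_pos_of_derivative_eq_prod hQ).1]
  exact le_card_roots_of_interlacing hw hQ hroot hs_le hs_ge

theorem hyperbolic_iff_neg_one_pow_mul_eval_nonneg (hn : 1 ≤ n) (hw : AntitoneOn w (Set.Icc 1 n))
    (hQ : Q.derivative = ∏ k ∈ Icc 1 n, (X - C (w k))) :
    Hyperbolic Q ↔ ∀ m ∈ Icc 1 n, 0 ≤ (-1) ^ m * Q.eval (w m) :=
  ⟨fun h _ hm => neg_one_pow_mul_eval_nonneg_of_hyperbolic hw hQ h hm,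
    hyperbolic_of_neg_one_pow_mul_eval_nonneg hn hw hQ⟩

end CriticalPoints

theorem exists_neg_one_pow_mul_sub_nonneg_iff {n : ℕ} (hn : 1 ≤ n) (f : ℕ → ℝ) :
    (∃ c : ℝ, ∀ m ∈ Finset.Icc 1 n, 0 ≤ (-1) ^ m * (f m - c)) ↔
      ∀ j ∈ Finset.Icc 1 n, ∀ k ∈ Finset.Icc 1 n, Even j → Odd k → f k ≤ f j := by
  constructor
  · rintro ⟨c, hc⟩ j hj k hk hj_even hk_odd
    have hcj := hc j hj
    have hck := hc k hk
    rw [hj_even.neg_one_pow] at hcj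
    rw [hk_odd.neg_one_pow] at hck
    linarith
  · intro h
    obtain ⟨k₀, hk₀, hmax⟩ := ((Finset.Icc 1 n).filter Odd).exists_max_image f
      ⟨1, Finset.mem_filter.2 ⟨Finset.mem_Icc.2 ⟨le_rfl, hn⟩, odd_one⟩⟩
    obtain ⟨hk₀, hk₀_odd⟩ := Finset.mem_filter.1 hk₀
    refine ⟨f k₀, fun m hm => ?_⟩
    rcases Nat.even_or_odd m with hm_even | hm_odd
    · rw [hm_even.neg_one_pow]
      linarith [h m hm k₀ hk₀ hm_even hk₀_odd]
    · rw [hm_odd.neg_one_pow]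
      linarith [hmax m (Finset.mem_filter.2 ⟨hm, hm_odd⟩)]

theorem stmt_0 (n : ℕ) (hn : 1 ≤ n) (w : ℕ → ℝ)
    (hw : ∀ i ∈ Finset.Ico 1 n, w (i + 1) ≤ w i)
    (p P : Polynomial ℝ)
    (hp : p = ∏ k ∈ Finset.Icc 1 n, (X - C (w k)))
    (hP : derivative P = p) :
    (∃ c : ℝ, Hyperbolic (P - C c)) ↔
      (∀ j ∈ Finset.Icc 1 n, ∀ k ∈ Finset.Icc 1 n, Even j → Odd k →
        P.eval (w k) ≤ P.eval (w j)) := by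
  have hanti : AntitoneOn w (Set.Icc 1 n) := antitoneOn_of_add_one_le Set.ordConnected_Icc
    fun i _ hi hi1 => hw i (Finset.mem_Ico.2 ⟨hi.1, hi1.2⟩)
  have hQ (c : ℝ) : (P - C c).derivative = ∏ k ∈ Finset.Icc 1 n, (X - C (w k)) := by
    rw [derivative_sub, derivative_C, sub_zero, hP, hp]
  simp_rw [hyperbolic_iff_neg_one_pow_mul_eval_nonneg hn hanti (hQ _), eval_sub, eval_C]
  exact exists_neg_one_pow_mul_sub_nonneg_iff hn (P.eval <| w ·)
end

section
/- Let n ≥ 1 and let w_1 ≥ w_2 ≥ ... ≥ w_n be real numbers. Let p(x) = ∏_{k=1}^{n} (x - w_k), let P be any real-polynomial antiderivative of p, and suppose c is a real number satisfying max{P(w_k) : 1 ≤ k ≤ n, k odd} ≤ c ≤ min{P(w_k) : 1 ≤ k ≤ n, k even}. Then P(x) - c has all of its complex roots real. -/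
open Polynomial Filter

lemma my_exists_root_ge (f : Polynomial ℝ) (hdeg : 0 < f.degree)
    (hlc : 0 ≤ f.leadingCoeff) (a : ℝ) (ha : f.eval a ≤ 0) :
    ∃ t, a ≤ t ∧ f.eval t = 0 := by
  have h := f.tendsto_atTop_of_leadingCoeff_nonneg hdeg hlc
  obtain ⟨b, hb0, hba⟩ := ((h.eventually_ge_atTop 0).and (eventually_ge_atTop a)).exists
  have hmem : (0:ℝ) ∈ Set.Icc (f.eval a) (f.eval b) := ⟨ha, hb0⟩
  obtain ⟨t, ht, ht0⟩ := intermediate_value_Icc hba (f.continuous.continuousOn) hmem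
  exact ⟨t, ht.1, ht0⟩

lemma my_exists_root_le (f : Polynomial ℝ) (hdeg : 0 < f.degree)
    (hlc : 0 ≤ (f.comp (-X)).leadingCoeff) (a : ℝ) (ha : f.eval a ≤ 0) :
    ∃ t, t ≤ a ∧ f.eval t = 0 := by
  have hnd : (f.comp (-X)).natDegree = f.natDegree := by
    rw [natDegree_comp]; simp
  have hdeg' : 0 < (f.comp (-X)).degree := by
    rw [← natDegree_pos_iff_degree_pos] at hdeg ⊢
    omega
  obtain ⟨t, ht, ht0⟩ := my_exists_root_ge (f.comp (-X)) hdeg' hlc (-a)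
    (by simpa [eval_comp] using ha)
  exact ⟨-t, by linarith, by simpa [eval_comp] using ht0⟩

theorem stmt_1 (n : ℕ) (hn : 1 ≤ n) (w : ℕ → ℝ)
    (hw : ∀ i ∈ Finset.Ico 1 n, w (i + 1) ≤ w i)
    (p P : Polynomial ℝ)
    (hp : p = ∏ k ∈ Finset.Icc 1 n, (X - C (w k)))
    (hP : derivative P = p)
    (c : ℝ)
    (hc1 : ∀ k ∈ Finset.Icc 1 n, Odd k → P.eval (w k) ≤ c)
    (hc2 : ∀ j ∈ Finset.Icc 1 n, Even j → c ≤ P.eval (w j)) :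
    Hyperbolic (P - C c) := by
  classical
  set f : Polynomial ℝ := P - C c with hfdef
  have hdf : derivative f = p := by
    rw [hfdef, derivative_sub, derivative_C, sub_zero, hP]
  -- basic facts about p
  have hpm : p.Monic := by
    rw [hp]; exact monic_prod_of_monic _ _ fun k _ => monic_X_sub_C _
  have hp0 : p ≠ 0 := hpm.ne_zero
  have hpn : p.natDegree = n := by
    rw [hp, natDegree_prod _ _ fun k _ => X_sub_C_ne_zero (w k)]
    simp [natDegree_X_sub_C]
  -- degree and leading coefficient of f
  have hf0 : f ≠ 0 := fun h => hp0 (by rw [← hdf, h, derivative_zero])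
  have hcoeff : ∀ m : ℕ, f.coeff (m + 1) * (m + 1) = p.coeff m := by
    intro m; rw [← hdf, coeff_derivative]
  have hfn : f.natDegree = n + 1 := by
    have hle : f.natDegree ≤ n + 1 := by
      rw [natDegree_le_iff_coeff_eq_zero]
      intro N hN
      obtain ⟨m, rfl⟩ : ∃ m, N = m + 1 := ⟨N - 1, by omega⟩
      have h1 : p.coeff m = 0 := coeff_eq_zero_of_natDegree_lt (by omega)
      have h2 := hcoeff m
      rw [h1] at h2
      have hne : ((m : ℝ) + 1) ≠ 0 := by positivity
      exact by nlinarith [h2]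
    have hge : n + 1 ≤ f.natDegree := by
      have h1 : (derivative f).natDegree ≤ f.natDegree - 1 := natDegree_derivative_le f
      rw [hdf, hpn] at h1
      have h2 : f.natDegree ≠ 0 := by
        intro h
        obtain ⟨a, ha⟩ := natDegree_eq_zero.mp h
        rw [← ha] at hdf
        rw [derivative_C] at hdf
        exact hp0 hdf.symm
      omega
    omega
  have hlc : f.leadingCoeff = 1 / (n + 1) := by
    have h2 := hcoeff n
    have h3 : p.coeff n = 1 := by rw [← hpn]; exact hpm.coeff_natDegree
    rw [h3] at h2
    rw [leadingCoeff, hfn]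
    field_simp
    linarith [h2]
  have hdegpos : 0 < f.degree := natDegree_pos_iff_degree_pos.mp (by omega)
  have hlcpos : 0 < f.leadingCoeff := by rw [hlc]; positivity
  -- sign facts
  have hodd : ∀ k, 1 ≤ k → k ≤ n → Odd k → f.eval (w k) ≤ 0 := by
    intro k h1 h2 hk
    have := hc1 k (Finset.mem_Icc.mpr ⟨h1, h2⟩) hk
    simp only [hfdef, eval_sub, eval_C]
    linarith
  have heven : ∀ k, 1 ≤ k → k ≤ n → Even k → 0 ≤ f.eval (w k) := by
    intro k h1 h2 hk
    have := hc2 k (Finset.mem_Icc.mpr ⟨h1, h2⟩) hk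
    simp only [hfdef, eval_sub, eval_C]
    linarith
  -- existence of roots
  have hex : ∀ k : ℕ, ∃ t : ℝ,
      k ≤ n → (f.IsRoot t ∧ (1 ≤ k → t ≤ w k) ∧ (k < n → w (k + 1) ≤ t)) := by
    intro k
    by_cases hk : k ≤ n
    swap
    · exact ⟨0, fun h => absurd h hk⟩
    rcases Nat.eq_zero_or_pos k with rfl | hk1
    · obtain ⟨t, ht, ht0⟩ := my_exists_root_ge f hdegpos hlcpos.le (w 1)
        (hodd 1 le_rfl hn odd_one)
      exact ⟨t, fun _ => ⟨ht0, fun h => by omega, fun _ => ht⟩⟩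
    rcases lt_or_eq_of_le hk with hkn | rfl
    · -- middle intervals: IVT
      have hab : w (k + 1) ≤ w k := hw k (Finset.mem_Ico.mpr ⟨hk1, hkn⟩)
      rcases Nat.even_or_odd k with hke | hko
      · have h1 : 0 ≤ f.eval (w k) := heven k hk1 hk hke
        have h2 : f.eval (w (k + 1)) ≤ 0 := hodd (k + 1) (by omega) (by omega) hke.add_one
        obtain ⟨t, ht, ht0⟩ := intermediate_value_Icc hab f.continuous.continuousOn
          (Set.mem_Icc.mpr ⟨h2, h1⟩)
        exact ⟨t, fun _ => ⟨ht0, fun _ => ht.2, fun _ => ht.1⟩⟩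
      · have h1 : f.eval (w k) ≤ 0 := hodd k hk1 hk hko
        have h2 : 0 ≤ f.eval (w (k + 1)) := heven (k + 1) (by omega) (by omega) hko.add_one
        obtain ⟨t, ht, ht0⟩ := intermediate_value_Icc' hab f.continuous.continuousOn
          (Set.mem_Icc.mpr ⟨h1, h2⟩)
        exact ⟨t, fun _ => ⟨ht0, fun _ => ht.2, fun _ => ht.1⟩⟩
    · -- leftmost root
      have hXnd : ((-X : Polynomial ℝ)).natDegree ≠ 0 := by simp
      rcases Nat.even_or_odd k with hke | hko
      · -- k = n even : f.eval (w n) ≥ 0, use -f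
        obtain ⟨t, ht, ht0⟩ := my_exists_root_le (-f)
          (by rw [degree_neg]; exact hdegpos)
          (by
            rw [neg_comp, leadingCoeff_neg, leadingCoeff_comp hXnd,
              leadingCoeff_neg, leadingCoeff_X, hfn]
            have : ((-1 : ℝ)) ^ (k + 1) = -1 := hke.add_one.neg_one_pow
            rw [this]
            nlinarith [hlcpos])
          (w k)
          (by rw [eval_neg, neg_nonpos]; exact heven k hk1 le_rfl hke)
        refine ⟨t, fun _ => ⟨?_, fun _ => ht, fun h => by omega⟩⟩
        rw [IsRoot, ← neg_eq_zero, ← eval_neg]; exact ht0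
      · obtain ⟨t, ht, ht0⟩ := my_exists_root_le f hdegpos
          (by
            rw [leadingCoeff_comp hXnd, leadingCoeff_neg, leadingCoeff_X, hfn]
            have : ((-1 : ℝ)) ^ (k + 1) = 1 := hko.add_one.neg_one_pow
            rw [this, mul_one]
            exact hlcpos.le)
          (w k) (hodd k hk1 le_rfl hko)
        exact ⟨t, fun _ => ⟨ht0, fun _ => ht, fun h => by omega⟩⟩
  choose x hx using hex
  -- x is antitone on [0, n]
  have hxs : ∀ k, k < n → x (k + 1) ≤ x k := fun k hk =>
    le_trans ((hx (k + 1) (by omega)).2.1 (by omega)) ((hx k hk.le).2.2 hk)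
  have hxa : ∀ j l, j ≤ l → l ≤ n → x l ≤ x j := by
    intro j l hjl hln
    induction l with
    | zero =>
      obtain rfl := Nat.le_zero.mp hjl
      exact le_rfl
    | succ m ih =>
      rcases Nat.eq_or_lt_of_le hjl with rfl | hlt
      · exact le_rfl
      · exact le_trans (hxs m (by omega)) (ih (by omega) (by omega))
  -- the multiset of chosen roots
  set M : Multiset ℝ := (Finset.range (n + 1)).val.map x with hM
  have hMle : M ≤ f.roots := by
    rw [Multiset.le_iff_count]
    intro t
    rw [hM, Multiset.count_map]
    have hfe : Multiset.filter (fun a => t = x a) (Finset.range (n + 1)).val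
        = ((Finset.range (n + 1)).filter (fun a => t = x a)).val := by
      rw [Finset.filter_val]
    rw [hfe]
    set S : Finset ℕ := (Finset.range (n + 1)).filter (fun a => t = x a) with hS
    show S.card ≤ _
    by_cases hSne : S.Nonempty
    swap
    · simp [Finset.not_nonempty_iff_eq_empty.mp hSne]
    set m := S.min' hSne with hm
    have hmS : m ∈ S := S.min'_mem hSne
    have hmn : m ≤ n := by
      have := (Finset.mem_filter.mp hmS).1; rw [Finset.mem_range] at this; omega
    have hmt : t = x m := (Finset.mem_filter.mp hmS).2
    have hroot : f.IsRoot t := hmt ▸ (hx m hmn).1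
    -- every non-minimal element of S gives a w equal to t
    set T : Finset ℕ := (Finset.Icc 1 n).filter (fun i => t = w i) with hT
    have hsub : S.erase m ⊆ T := by
      intro k hk
      obtain ⟨hkm, hkS⟩ := Finset.mem_erase.mp hk
      have hkmem := Finset.mem_filter.mp hkS
      have hkn : k ≤ n := by
        have := Finset.mem_range.mp hkmem.1; omega
      have hkt : t = x k := hkmem.2
      have hmk : m < k := lt_of_le_of_ne (S.min'_le k hkS) (fun h => hkm h.symm)
      have h1 : x (k - 1) ≤ x m := hxa m (k - 1) (by omega) (by omega)
      have h2 : x k ≤ x (k - 1) := hxa (k - 1) k (by omega) hkn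
      have hx1 : x (k - 1) = t := le_antisymm (hmt ▸ h1) (hkt ▸ h2)
      have hw1 : w (k - 1 + 1) ≤ x (k - 1) := (hx (k - 1) (by omega)).2.2 (by omega)
      have hw2 : x k ≤ w k := (hx k hkn).2.1 (by omega)
      have hk1 : k - 1 + 1 = k := by omega
      rw [hk1] at hw1
      refine Finset.mem_filter.mpr ⟨Finset.mem_Icc.mpr ⟨by omega, hkn⟩, ?_⟩
      have : w k ≤ t := hx1 ▸ hw1
      have : t ≤ w k := hkt ▸ hw2
      linarith
    have hcard1 : S.card ≤ T.card + 1 := by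
      have := Finset.card_le_card hsub
      have := Finset.card_erase_of_mem hmS
      omega
    -- root multiplicities
    have hproots : p.roots = (Finset.Icc 1 n).val.map w := by
      have hmm : Multiset.map (fun k => X - C (w k)) (Finset.Icc 1 n).val
          = Multiset.map (fun a => X - C a) (Multiset.map w (Finset.Icc 1 n).val) := by
        rw [Multiset.map_map]
        rfl
      rw [hp, Finset.prod_eq_multiset_prod, hmm, roots_multiset_prod_X_sub_C]
    have hTcount : (Multiset.count t p.roots) = T.card := by
      rw [hproots, Multiset.count_map]
      rfl
    have hmul : p.rootMultiplicity t + 1 = f.rootMultiplicity t := by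
      have h1 := derivative_rootMultiplicity_of_root hroot
      rw [hdf] at h1
      have h2 : 0 < f.rootMultiplicity t := (rootMultiplicity_pos hf0).mpr hroot
      omega
    rw [count_roots]
    rw [count_roots] at hTcount
    omega
  -- root count equals degree
  have hcard : Multiset.card f.roots = f.natDegree := by
    have h1 := Multiset.card_le_card hMle
    rw [hM, Multiset.card_map, Finset.range_val, Multiset.card_range] at h1
    have h2 := f.card_roots'
    rw [hfn] at h2 ⊢
    omega
  -- conclude
  unfold Hyperbolic
  intro z hz
  rw [← roots_map_of_injective_of_card_eq_natDegree
    (algebraMap ℝ ℂ).injective hcard] at hz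
  obtain ⟨r, hr, rfl⟩ := Multiset.mem_map.mp hz
  simp
end

section
/- Let n ≥ 1 and let w_1 ≥ w_2 ≥ ... ≥ w_n be real numbers. Let p(x) = ∏_{k=1}^{n} (x - w_k) and let P be any real-polynomial antiderivative of p. If j, k ∈ {1, ..., n} with j even, k odd, and |j - k| = 1, then P(w_j) ≥ P(w_k). -/
open Polynomial

/-- Key auxiliary lemma: between consecutive roots, the antiderivative is
monotone or antitone according to the parity of the index. -/
lemma stmt_3_aux (n m : ℕ) (w : ℕ → ℝ)
    (hmono : ∀ a b, 1 ≤ a → a ≤ b → b ≤ n → w b ≤ w a)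
    (p P : Polynomial ℝ)
    (hp : p = ∏ k ∈ Finset.Icc 1 n, (X - C (w k)))
    (hP : derivative P = p)
    (hm1 : 1 ≤ m) (hmn : m + 1 ≤ n) :
    (Even m → P.eval (w (m + 1)) ≤ P.eval (w m)) ∧
    (Odd m → P.eval (w m) ≤ P.eval (w (m + 1))) := by
  have hI : w (m + 1) ≤ w m := hmono m (m + 1) hm1 (Nat.le_succ m) hmn
  -- product splitting
  have hprod : ∀ x : ℝ, p.eval x =
      (∏ i ∈ Finset.Ioc 0 m, (x - w i)) * ∏ i ∈ Finset.Ioc m n, (x - w i) := by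
    intro x
    have h1 : Finset.Icc 1 n = Finset.Ioc 0 n := by ext i; simp; omega
    rw [hp, h1, ← Finset.prod_Ioc_consecutive _ (Nat.zero_le m) (by omega : m ≤ n)]
    simp [eval_prod]
  -- sign of the left part
  have hA : ∀ x : ℝ, (∏ i ∈ Finset.Ioc 0 m, (x - w i)) =
      (-1 : ℝ) ^ m * ∏ i ∈ Finset.Ioc 0 m, (w i - x) := by
    intro x
    have : ∀ i ∈ Finset.Ioc 0 m, (x - w i) = (-1) * (w i - x) := by
      intro i _; ring
    rw [Finset.prod_congr rfl this, Finset.prod_mul_distrib, Finset.prod_const]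
    simp [Nat.card_Ioc]
  have hAnn : ∀ x ∈ Set.Icc (w (m + 1)) (w m),
      0 ≤ ∏ i ∈ Finset.Ioc 0 m, (w i - x) := by
    intro x hx
    apply Finset.prod_nonneg
    intro i hi
    rw [Finset.mem_Ioc] at hi
    have : w m ≤ w i := hmono i m hi.1 hi.2 (by omega)
    linarith [hx.2]
  have hBnn : ∀ x ∈ Set.Icc (w (m + 1)) (w m),
      0 ≤ ∏ i ∈ Finset.Ioc m n, (x - w i) := by
    intro x hx
    apply Finset.prod_nonneg
    intro i hi
    rw [Finset.mem_Ioc] at hi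
    have : w i ≤ w (m + 1) := hmono (m + 1) i (by omega) hi.1 hi.2
    linarith [hx.1]
  have hcont : ContinuousOn (fun y => P.eval y) (Set.Icc (w (m + 1)) (w m)) :=
    (Polynomial.continuous P).continuousOn
  have hdiff : DifferentiableOn ℝ (fun y => P.eval y)
      (interior (Set.Icc (w (m + 1)) (w m))) :=
    (Polynomial.differentiable P).differentiableOn
  have hderiv : ∀ x : ℝ, deriv (fun y => P.eval y) x = p.eval x := by
    intro x; rw [Polynomial.deriv, hP]
  constructor
  · intro hme
    have hmon : MonotoneOn (fun y => P.eval y) (Set.Icc (w (m + 1)) (w m)) := by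
      apply monotoneOn_of_deriv_nonneg (convex_Icc _ _) hcont hdiff
      intro x hx
      rw [interior_Icc] at hx
      have hx' : x ∈ Set.Icc (w (m + 1)) (w m) := Set.Ioo_subset_Icc_self hx
      rw [hderiv, hprod, hA, hme.neg_one_pow, one_mul]
      exact mul_nonneg (hAnn x hx') (hBnn x hx')
    exact hmon (Set.left_mem_Icc.mpr hI) (Set.right_mem_Icc.mpr hI) hI
  · intro hmo
    have hant : AntitoneOn (fun y => P.eval y) (Set.Icc (w (m + 1)) (w m)) := by
      apply antitoneOn_of_deriv_nonpos (convex_Icc _ _) hcont hdiff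
      intro x hx
      rw [interior_Icc] at hx
      have hx' : x ∈ Set.Icc (w (m + 1)) (w m) := Set.Ioo_subset_Icc_self hx
      rw [hderiv, hprod, hA, hmo.neg_one_pow]
      have := mul_nonneg (hAnn x hx') (hBnn x hx')
      nlinarith
    exact hant (Set.left_mem_Icc.mpr hI) (Set.right_mem_Icc.mpr hI) hI

theorem stmt_3 (n : ℕ) (hn : 1 ≤ n) (w : ℕ → ℝ)
    (hw : ∀ i ∈ Finset.Ico 1 n, w (i + 1) ≤ w i)
    (p P : Polynomial ℝ)
    (hp : p = ∏ k ∈ Finset.Icc 1 n, (X - C (w k)))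
    (hP : derivative P = p)
    (j k : ℕ) (hj : j ∈ Finset.Icc 1 n) (hk : k ∈ Finset.Icc 1 n)
    (hje : Even j) (hko : Odd k) (hjk : |(j : ℤ) - (k : ℤ)| = 1) :
    P.eval (w k) ≤ P.eval (w j) := by
  have hmono : ∀ a b, 1 ≤ a → a ≤ b → b ≤ n → w b ≤ w a := by
    intro a b ha hab hbn
    induction b with
    | zero => omega
    | succ b ih =>
      rcases Nat.lt_or_ge a (b + 1) with h | h
      · have hb : w (b + 1) ≤ w b := hw b (Finset.mem_Ico.mpr ⟨by omega, by omega⟩)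
        exact hb.trans (ih (by omega) (by omega))
      · have : a = b + 1 := by omega
        simp [this]
  rw [Finset.mem_Icc] at hj hk
  rw [abs_eq (by norm_num : (0:ℤ) ≤ 1)] at hjk
  rcases hjk with h | h
  · -- j = k + 1, so m = k is odd
    have hjk' : j = k + 1 := by omega
    have := (stmt_3_aux n k w hmono p P hp hP hk.1 (by omega)).2 hko
    rw [hjk']
    exact this
  · -- k = j + 1, so m = j is even
    have hjk' : k = j + 1 := by omega
    have := (stmt_3_aux n j w hmono p P hp hP hj.1 (by omega)).1 hje
    rw [hjk']
    exact this
end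

section
/- Let w_1 ≥ w_2 ≥ w_3 ≥ w_4 be real numbers, let p(x) = ∏_{k=1}^{4} (x - w_k), and let P be any real-polynomial antiderivative of p. Then there exists a real number c such that P(x) - c has all of its complex roots real if and only if P(w_4) ≥ P(w_1). -/
open Polynomial

/-!
Write `Q = P - c`, so that `Q' = p`. If `Q` is hyperbolic, Gauss–Lucas puts the critical points
`w₄` and `w₁` inside the convex hull of the (real) roots of `Q`, so `Q` has a root `≤ w₄` and a
root `≥ w₁`; as `Q` is increasing on `(-∞, w₄]` and on `[w₁, ∞)`, this gives
`Q(w₁) ≤ 0 ≤ Q(w₄)`.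

Conversely, for `c = max (P w₁) (P w₃)` the values of `Q` at `w₄, w₃, w₂, w₁` are alternately
`≥ 0` and `≤ 0`, so the intermediate value theorem gives roots `r₀ ≤ w₄ ≤ r₁ ≤ w₃ ≤ r₂ ≤ w₂ ≤ r₃ ≤
w₁ ≤ r₄`. These may coincide, but a root shared by `k + 1` of the intervals is a root of `p` of
multiplicity `≥ k`, hence of `Q` of multiplicity `≥ k + 1`; so `Q` has five real roots counted
with multiplicity.
-/

open Filter Set Finset

namespace Polynomial

theorem hyperbolic_of_natDegree_le_card_roots {Q : ℝ[X]}
    (h : Q.natDegree ≤ Multiset.card Q.roots) : Hyperbolic Q := by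
  intro z hz
  rw [(splits_iff_card_roots.2 (le_antisymm Q.card_roots' h)).roots_map] at hz
  obtain ⟨x, -, rfl⟩ := Multiset.mem_map.1 hz
  simp

theorem eval_map_algebraMap_ofReal (Q : ℝ[X]) (x : ℝ) :
    (Q.map (algebraMap ℝ ℂ)).eval (x : ℂ) = Q.eval x := by
  rw [eval_map]
  exact eval₂_at_apply (algebraMap ℝ ℂ) x

theorem Hyperbolic.exists_isRoot_le_and_ge {Q : ℝ[X]} (hQ : Hyperbolic Q) (hdeg : 0 < Q.degree)
    {w : ℝ} (hw : Q.derivative.IsRoot w) :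
    (∃ r ≤ w, Q.IsRoot r) ∧ ∃ r ≥ w, Q.IsRoot r := by
  set Qc := Q.map (algebraMap ℝ ℂ)
  have hwc : (w : ℂ) ∈ convexHull ℝ (Qc.rootSet ℂ) := by
    refine rootSet_derivative_subset_convexHull_rootSet (by rwa [degree_map]) ?_
    rw [mem_rootSet, coe_aeval_eq_eval, derivative_map]
    refine ⟨(Polynomial.map_ne_zero_iff (algebraMap ℝ ℂ).injective).2 ?_, ?_⟩
    · exact fun h => (natDegree_pos_iff_degree_pos.2 hdeg).ne' (derivative_eq_zero.1 h)
    · rw [eval_map_algebraMap_ofReal, hw.eq_zero, Complex.ofReal_zero]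
  have hreal : ∀ z ∈ Qc.rootSet ℂ, Q.IsRoot z.re := by
    intro z hz
    have hz' : z ∈ Qc.roots := mem_roots'.2 (mem_rootSet.1 hz)
    have hz_eq : z = (z.re : ℂ) := Complex.ext rfl (by simp [hQ z hz'])
    rw [mem_roots', IsRoot.def, hz_eq, eval_map_algebraMap_ofReal] at hz'
    exact_mod_cast hz'.2
  constructor
  · by_contra! h
    have hsub : Qc.rootSet ℂ ⊆ {z | w < z.re} :=
      fun z hz => not_le.1 fun hle => h _ hle (hreal z hz)
    simpa using convexHull_min hsub (convex_halfSpace_re_gt w) hwc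
  · by_contra! h
    have hsub : Qc.rootSet ℂ ⊆ {z | z.re < w} :=
      fun z hz => not_le.1 fun hle => h _ hle (hreal z hz)
    simpa using convexHull_min hsub (convex_halfSpace_re_lt w) hwc

theorem eval_le_eval_of_derivative_nonneg {Q : ℝ[X]} {a b : ℝ} (hab : a ≤ b)
    (h : ∀ x ∈ Icc a b, 0 ≤ Q.derivative.eval x) : Q.eval a ≤ Q.eval b :=
  monotoneOn_of_deriv_nonneg (convex_Icc a b) Q.continuousOn Q.differentiableOn
    (fun x hx => by rw [Polynomial.deriv]; exact h x (interior_subset hx))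
    (left_mem_Icc.2 hab) (right_mem_Icc.2 hab) hab

theorem eval_le_eval_of_derivative_nonpos {Q : ℝ[X]} {a b : ℝ} (hab : a ≤ b)
    (h : ∀ x ∈ Icc a b, Q.derivative.eval x ≤ 0) : Q.eval b ≤ Q.eval a := by
  simpa using eval_le_eval_of_derivative_nonneg (Q := -Q) hab (by simpa using h)

theorem exists_isRoot_mem_Icc_of_mul_nonpos {Q : ℝ[X]} {a b : ℝ} (hab : a ≤ b)
    (h : Q.eval a * Q.eval b ≤ 0) : ∃ r ∈ Icc a b, Q.IsRoot r := by
  rcases mul_nonpos_iff.1 h with ⟨ha, hb⟩ | ⟨ha, hb⟩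
  · obtain ⟨r, hr, hr0⟩ := intermediate_value_Icc' hab Q.continuousOn ⟨hb, ha⟩
    exact ⟨r, hr, hr0⟩
  · obtain ⟨r, hr, hr0⟩ := intermediate_value_Icc hab Q.continuousOn ⟨ha, hb⟩
    exact ⟨r, hr, hr0⟩

theorem tendsto_atBot_of_odd_natDegree {Q : ℝ[X]} (hodd : Odd Q.natDegree)
    (hlc : 0 < Q.leadingCoeff) : Tendsto (fun x => Q.eval x) atBot atBot := by
  have hneg : (-X : ℝ[X]).natDegree = 1 := by simp
  have hdeg : 0 < (Q.comp (-X)).degree := by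
    rw [← natDegree_pos_iff_degree_pos, natDegree_comp, hneg, mul_one]
    exact hodd.pos
  have hlc' : (Q.comp (-X)).leadingCoeff ≤ 0 := by
    rw [leadingCoeff_comp (by rw [hneg]; exact one_ne_zero), leadingCoeff_neg, leadingCoeff_X,
      hodd.neg_one_pow]
    linarith
  simpa [Function.comp_def] using
    (tendsto_atBot_of_leadingCoeff_nonpos _ hdeg hlc').comp tendsto_neg_atBot_atTop

theorem exists_isRoot_le_of_eval_nonneg {Q : ℝ[X]} (hodd : Odd Q.natDegree)
    (hlc : 0 < Q.leadingCoeff) {a : ℝ} (ha : 0 ≤ Q.eval a) : ∃ r ≤ a, Q.IsRoot r := by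
  obtain ⟨r, hr, hr0⟩ :=
    intermediate_value_Iic Q.continuousOn (tendsto_atBot_of_odd_natDegree hodd hlc) ha
  exact ⟨r, hr, hr0⟩

theorem exists_isRoot_ge_of_eval_nonpos {Q : ℝ[X]} (hdeg : 0 < Q.degree)
    (hlc : 0 < Q.leadingCoeff) {a : ℝ} (ha : Q.eval a ≤ 0) : ∃ r ≥ a, Q.IsRoot r := by
  obtain ⟨r, hr, hr0⟩ := intermediate_value_Ici Q.continuousOn
    (tendsto_atTop_of_leadingCoeff_nonneg Q hdeg hlc.le) ha
  exact ⟨r, hr, hr0⟩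

theorem natDegree_eq_of_derivative_monic {Q : ℝ[X]} (h : Q.derivative.Monic) :
    Q.natDegree = Q.derivative.natDegree + 1 := by
  have : Q.natDegree ≠ 0 := fun h0 => h.ne_zero (derivative_eq_zero.2 h0)
  rw [natDegree_derivative]
  omega

theorem leadingCoeff_pos_of_derivative_monic {Q : ℝ[X]} (h : Q.derivative.Monic) :
    0 < Q.leadingCoeff := by
  have hcoeff := coeff_derivative Q Q.derivative.natDegree
  rw [h.coeff_natDegree, ← natDegree_eq_of_derivative_monic h] at hcoeff
  exact pos_of_mul_pos_left (hcoeff ▸ one_pos) (by positivity)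

end Polynomial

theorem Fin.card_filter_eq_le_of_interlacing {α : Type*} [PartialOrder α] [DecidableEq α]
    {n : ℕ} {x : Fin n → α} {r : Fin (n + 1) → α}
    (hinter : ∀ i : Fin n, r i.castSucc ≤ x i ∧ x i ≤ r i.succ) (a : α) :
    #{k | r k = a} ≤ #{i | x i = a} + 1 := by
  have hmono : Monotone r := Fin.monotone_iff_le_succ.2 fun i => (hinter i).1.trans (hinter i).2
  set K : Finset (Fin (n + 1)) := {k | r k = a}
  set I : Finset (Fin n) := {i | x i = a}
  rcases K.eq_empty_or_nonempty with hK | hK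
  · simp [hK]
  set m := K.max' hK
  have hm : r m = a := (mem_filter.1 (K.max'_mem hK)).2
  -- every `k ∈ K` below the last one is squeezed: `a = r k ≤ x k ≤ r m = a`
  have hsub : K ⊆ insert m (I.map Fin.castSuccEmb) := by
    intro k hk
    rcases (K.le_max' k hk).lt_or_eq with hlt | heq
    · set i := k.castPred (Fin.ne_last_of_lt hlt)
      have hi : i.castSucc = k := Fin.castSucc_castPred _ _
      refine mem_insert_of_mem (mem_map.2 ⟨i, mem_filter.2 ⟨mem_univ _, le_antisymm ?_ ?_⟩, hi⟩)
      · calc x i ≤ r i.succ := (hinter i).2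
          _ ≤ r m := hmono (Fin.castSucc_lt_iff_succ_le.1 (hi ▸ hlt))
          _ = a := hm
      · exact (mem_filter.1 hk).2 ▸ hi ▸ (hinter i).1
    · exact heq ▸ mem_insert_self _ _
  calc #K ≤ #(insert m (I.map Fin.castSuccEmb)) := card_le_card hsub
    _ ≤ #I + 1 := by simpa using card_insert_le m (I.map Fin.castSuccEmb)

theorem Finset.count_map_univ {ι α : Type*} [Fintype ι] [DecidableEq α] (f : ι → α) (a : α) :
    Multiset.count a (univ.val.map f) = #{i | f i = a} := by
  rw [Multiset.count_map]
  simp [Finset.card, Finset.filter_val, eq_comm]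

theorem Polynomial.card_roots_ge_of_interlacing {Q : ℝ[X]} (hQ : Q ≠ 0) {n : ℕ}
    {x : Fin n → ℝ} {r : Fin (n + 1) → ℝ} (hx : univ.val.map x ≤ Q.derivative.roots)
    (hr : ∀ k, Q.IsRoot (r k)) (hinter : ∀ i : Fin n, r i.castSucc ≤ x i ∧ x i ≤ r i.succ) :
    n + 1 ≤ Multiset.card Q.roots := by
  suffices univ.val.map r ≤ Q.roots by simpa using Multiset.card_le_card this
  refine Multiset.le_iff_count.2 fun a => ?_
  by_cases ha : a ∈ univ.val.map r
  swap
  · rw [Multiset.count_eq_zero.2 ha]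
    exact Nat.zero_le _
  obtain ⟨k, -, rfl⟩ := Multiset.mem_map.1 ha
  have hxa := Multiset.count_le_of_le (r k) hx
  have hmult := derivative_rootMultiplicity_of_root (hr k)
  have hpos := (rootMultiplicity_pos hQ).2 (hr k)
  rw [Finset.count_map_univ, count_roots] at hxa ⊢
  have := Fin.card_filter_eq_le_of_interlacing hinter (r k)
  omega

section Quartic

variable {w₁ w₂ w₃ w₄ : ℝ}

theorem eval_le_zero_le_eval_of_hyperbolic (h12 : w₂ ≤ w₁) (h23 : w₃ ≤ w₂) (h34 : w₄ ≤ w₃)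
    {Q : ℝ[X]} (hQ : Q.derivative = (X - C w₁) * (X - C w₂) * (X - C w₃) * (X - C w₄))
    (hhyp : Hyperbolic Q) : Q.eval w₁ ≤ 0 ∧ 0 ≤ Q.eval w₄ := by
  have hdeg : 0 < Q.degree := by
    rw [← natDegree_pos_iff_degree_pos, natDegree_eq_of_derivative_monic (by rw [hQ]; monicity!)]
    exact Nat.succ_pos _
  obtain ⟨-, r, hr, hr0⟩ := hhyp.exists_isRoot_le_and_ge hdeg (w := w₁) (by simp [hQ])
  obtain ⟨⟨s, hs, hs0⟩, -⟩ := hhyp.exists_isRoot_le_and_ge hdeg (w := w₄) (by simp [hQ])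
  constructor
  · refine (eval_le_eval_of_derivative_nonneg hr fun x ⟨hx, _⟩ => ?_).trans_eq hr0
    simp only [hQ, eval_mul, eval_sub, eval_X, eval_C]
    exact mul_nonneg (mul_nonneg (mul_nonneg (by linarith) (by linarith)) (by linarith))
      (by linarith)
  · refine hs0.symm.trans_le (eval_le_eval_of_derivative_nonneg hs fun x ⟨_, hx⟩ => ?_)
    simp only [hQ, eval_mul, eval_sub, eval_X, eval_C]
    exact mul_nonneg_of_nonpos_of_nonpos (mul_nonpos_of_nonneg_of_nonpos
      (mul_nonneg_of_nonpos_of_nonpos (by linarith) (by linarith)) (by linarith)) (by linarith)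

theorem hyperbolic_of_alternating_signs (h12 : w₂ ≤ w₁) (h23 : w₃ ≤ w₂) (h34 : w₄ ≤ w₃)
    {Q : ℝ[X]} (hQ : Q.derivative = (X - C w₁) * (X - C w₂) * (X - C w₃) * (X - C w₄))
    (h1 : Q.eval w₁ ≤ 0) (h2 : 0 ≤ Q.eval w₂) (h3 : Q.eval w₃ ≤ 0) (h4 : 0 ≤ Q.eval w₄) :
    Hyperbolic Q := by
  have hmonic : Q.derivative.Monic := by rw [hQ]; monicity!
  have hdeg : Q.natDegree = 5 := by
    have : Q.derivative.natDegree = 4 := by rw [hQ]; compute_degree!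
    rw [natDegree_eq_of_derivative_monic hmonic, this]
  have hlc := leadingCoeff_pos_of_derivative_monic hmonic
  have hQ0 : Q ≠ 0 := fun h => by simp [h] at hdeg
  obtain ⟨r₀, hr₀w₄, hr₀⟩ := exists_isRoot_le_of_eval_nonneg (by rw [hdeg]; decide) hlc h4
  obtain ⟨r₁, ⟨hw₄r₁, hr₁w₃⟩, hr₁⟩ :=
    exists_isRoot_mem_Icc_of_mul_nonpos h34 (mul_nonpos_of_nonneg_of_nonpos h4 h3)
  obtain ⟨r₂, ⟨hw₃r₂, hr₂w₂⟩, hr₂⟩ :=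
    exists_isRoot_mem_Icc_of_mul_nonpos h23 (mul_nonpos_of_nonpos_of_nonneg h3 h2)
  obtain ⟨r₃, ⟨hw₂r₃, hr₃w₁⟩, hr₃⟩ :=
    exists_isRoot_mem_Icc_of_mul_nonpos h12 (mul_nonpos_of_nonneg_of_nonpos h2 h1)
  obtain ⟨r₄, hw₁r₄, hr₄⟩ :=
    exists_isRoot_ge_of_eval_nonpos (natDegree_pos_iff_degree_pos.1 (by omega)) hlc h1
  refine hyperbolic_of_natDegree_le_card_roots (hdeg ▸ card_roots_ge_of_interlacing (n := 4)
    (x := ![w₄, w₃, w₂, w₁]) (r := ![r₀, r₁, r₂, r₃, r₄]) hQ0 ?_ ?_ ?_)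
  · simp [hQ, roots_mul, X_sub_C_ne_zero, Fin.univ_val_map]
    exact le_of_eq (Multiset.coe_reverse [w₁, w₂, w₃, w₄])
  · intro k
    fin_cases k <;> assumption
  · intro i
    fin_cases i <;> exact ⟨by assumption, by assumption⟩

theorem hyperbolic_sub_C_max (h12 : w₂ ≤ w₁) (h23 : w₃ ≤ w₂) (h34 : w₄ ≤ w₃)
    {P : ℝ[X]} (hP : P.derivative = (X - C w₁) * (X - C w₂) * (X - C w₃) * (X - C w₄))
    (hle : P.eval w₁ ≤ P.eval w₄) : Hyperbolic (P - C (max (P.eval w₁) (P.eval w₃))) := by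
  have h21 : P.eval w₁ ≤ P.eval w₂ := eval_le_eval_of_derivative_nonpos h12 fun x ⟨hx₁, hx₂⟩ => by
    simp only [hP, eval_mul, eval_sub, eval_X, eval_C]
    exact mul_nonpos_of_nonpos_of_nonneg (mul_nonpos_of_nonpos_of_nonneg
      (mul_nonpos_of_nonpos_of_nonneg (by linarith) (by linarith)) (by linarith))
      (by linarith)
  have h32 : P.eval w₃ ≤ P.eval w₂ := eval_le_eval_of_derivative_nonneg h23 fun x ⟨hx₁, hx₂⟩ => by
    simp only [hP, eval_mul, eval_sub, eval_X, eval_C]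
    exact mul_nonneg (mul_nonneg (mul_nonneg_of_nonpos_of_nonpos (by linarith) (by linarith))
      (by linarith)) (by linarith)
  have h34' : P.eval w₃ ≤ P.eval w₄ := eval_le_eval_of_derivative_nonpos h34 fun x ⟨hx₁, hx₂⟩ => by
    simp only [hP, eval_mul, eval_sub, eval_X, eval_C]
    exact mul_nonpos_of_nonpos_of_nonneg (mul_nonpos_of_nonneg_of_nonpos
      (mul_nonneg_of_nonpos_of_nonpos (by linarith) (by linarith)) (by linarith))
      (by linarith)
  refine hyperbolic_of_alternating_signs h12 h23 h34 (by simpa using hP) ?_ ?_ ?_ ?_ <;>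
    simp only [eval_sub, eval_C, sub_nonpos, sub_nonneg]
  · exact le_max_left _ _
  · exact max_le h21 h32
  · exact le_max_right _ _
  · exact max_le hle h34'

end Quartic

theorem stmt_4 (w₁ w₂ w₃ w₄ : ℝ) (h12 : w₂ ≤ w₁) (h23 : w₃ ≤ w₂) (h34 : w₄ ≤ w₃)
    (p P : Polynomial ℝ)
    (hp : p = (X - C w₁) * (X - C w₂) * (X - C w₃) * (X - C w₄))
    (hP : derivative P = p) :
    (∃ c : ℝ, Hyperbolic (P - C c)) ↔ P.eval w₁ ≤ P.eval w₄ := by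
  subst hp
  constructor
  · rintro ⟨c, hc⟩
    obtain ⟨h1, h4⟩ := eval_le_zero_le_eval_of_hyperbolic h12 h23 h34 (by simpa using hP) hc
    simp only [eval_sub, eval_C] at h1 h4
    linarith
  · exact fun hle => ⟨_, hyperbolic_sub_C_max h12 h23 h34 hP hle⟩
end

section
/- Every hyperbolic real polynomial of degree at most 3 (i.e. every real polynomial of degree ≤ 3 all of whose complex roots are real) has a hyperbolic antiderivative. -/
/-!
Over `ℝ` a polynomial is hyperbolic exactly when it splits, so it suffices to find a split
antiderivative of `a (X - r₁) ⋯ (X - rₙ)` for `n ≤ 3`; for `n ≤ 2` explicit ones are easy.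
For `n = 3` with `s` the middle root, the antiderivative vanishing at `s` has a double root there,
and its remaining quadratic factor has real roots because `(r - s)(t - s) ≤ 0`.
-/

open Polynomial

theorem hyperbolic_iff_splits {p : ℝ[X]} : Hyperbolic p ↔ p.Splits := by
  refine ⟨fun hp => ?_, fun hp z hz => ?_⟩
  · refine Splits.of_splits_map (algebraMap ℝ ℂ) (IsAlgClosed.splits _) fun z hz => ⟨z.re, ?_⟩
    exact Complex.ext rfl (hp z hz).symm
  · rw [hp.roots_map, Multiset.mem_map] at hz
    obtain ⟨x, -, rfl⟩ := hz
    exact Complex.ofReal_im x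

section Field

variable {K : Type*} [Field K]

def HasSplitAntiderivative (p : K[X]) : Prop :=
  ∃ P : K[X], derivative P = p ∧ P.Splits

theorem hasSplitAntiderivative_C (a : K) : HasSplitAntiderivative (C a) :=
  ⟨C a * X, by simp, Splits.X.C_mul a⟩

variable [CharZero K]

theorem hasSplitAntiderivative_C_mul_X_sub_C (a r : K) :
    HasSplitAntiderivative (C a * (X - C r)) := by
  refine ⟨C (a / 2) * (X - C r) ^ 2, ?_, ((Splits.X_sub_C r).pow 2).C_mul _⟩
  apply Polynomial.funext
  intro x
  simp [derivative_mul, derivative_pow]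
  ring

theorem hasSplitAntiderivative_C_mul_X_sub_C_mul_X_sub_C (a r s : K) :
    HasSplitAntiderivative (C a * ((X - C r) * (X - C s))) := by
  refine ⟨C (a / 3) * ((X - C r) ^ 2 * (X - C ((3 * s - r) / 2))), ?_,
    (((Splits.X_sub_C r).pow 2).mul (Splits.X_sub_C _)).C_mul _⟩
  apply Polynomial.funext
  intro x
  simp [derivative_mul, derivative_pow]
  ring

end Field

/-- `m ± δ/2` are the `u, v` with `2 (X - u)(X - v) + (X - s)(2X - u - v) = 4 (X - r)(X - t)`,
which is what `P' = p` asks for after cancelling `a/4 · (X - s)`. -/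
theorem hasSplitAntiderivative_cubic_of_between (a r s t : ℝ) (h : (r - s) * (t - s) ≤ 0) :
    HasSplitAntiderivative (C a * ((X - C r) * (X - C s) * (X - C t))) := by
  set m := s + 2 / 3 * (r + t - 2 * s)
  set δ := √(16 / 9 * (r + t - 2 * s) ^ 2 - 8 * ((r - s) * (t - s)))
  have hδ : δ ^ 2 = 16 / 9 * (r + t - 2 * s) ^ 2 - 8 * ((r - s) * (t - s)) :=
    Real.sq_sqrt (by nlinarith [sq_nonneg (r + t - 2 * s)])
  refine ⟨C (a / 4) * ((X - C s) ^ 2 * ((X - C (m + δ / 2)) * (X - C (m - δ / 2)))), ?_,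
    (((Splits.X_sub_C s).pow 2).mul ((Splits.X_sub_C _).mul (Splits.X_sub_C _))).C_mul _⟩
  apply Polynomial.funext
  intro x
  simp [derivative_mul, derivative_pow]
  linear_combination (-(a * (x - s)) / 8) * hδ

theorem hasSplitAntiderivative_cubic (a r s t : ℝ) :
    HasSplitAntiderivative (C a * ((X - C r) * (X - C s) * (X - C t))) := by
  by_cases hs : (r - s) * (t - s) ≤ 0
  · exact hasSplitAntiderivative_cubic_of_between a r s t hs
  by_cases hr : (s - r) * (t - r) ≤ 0
  · convert hasSplitAntiderivative_cubic_of_between a s r t hr using 2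
    ring
  · have ht : (r - t) * (s - t) ≤ 0 := by nlinarith
    convert hasSplitAntiderivative_cubic_of_between a r t s ht using 2
    ring

theorem hasSplitAntiderivative_of_splits {p : ℝ[X]} (hp : p.Splits) (hdeg : p.natDegree ≤ 3) :
    HasSplitAntiderivative p := by
  have hcard : p.roots.card ≤ 3 := hp.natDegree_eq_card_roots ▸ hdeg
  rw [hp.eq_prod_roots]
  generalize p.roots = s at hcard
  interval_cases h : s.card
  · simp [Multiset.card_eq_zero.mp h, hasSplitAntiderivative_C]
  · obtain ⟨r, rfl⟩ := Multiset.card_eq_one.mp h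
    simpa using hasSplitAntiderivative_C_mul_X_sub_C _ r
  · obtain ⟨r, s, rfl⟩ := Multiset.card_eq_two.mp h
    simpa using hasSplitAntiderivative_C_mul_X_sub_C_mul_X_sub_C _ r s
  · obtain ⟨r, s, t, rfl⟩ := Multiset.card_eq_three.mp h
    simpa [mul_assoc] using hasSplitAntiderivative_cubic _ r s t

theorem stmt_12 (p : Polynomial ℝ) (hdeg : p.degree ≤ 3) (hp : Hyperbolic p) :
    ∃ P : Polynomial ℝ, derivative P = p ∧ Hyperbolic P := by
  obtain ⟨P, hP, hPsplits⟩ :=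
    hasSplitAntiderivative_of_splits (hyperbolic_iff_splits.mp hp) (natDegree_le_of_degree_le hdeg)
  exact ⟨P, hP, hyperbolic_iff_splits.mpr hPsplits⟩
end

section
/- The polynomial p(x) = (x - 1)²(x - 4)² has no hyperbolic antiderivative: there is no real polynomial P with P' = p all of whose complex roots are real. -/
/-!
Since `P' = ((X - 1)(X - 4))²` is nonnegative, `P` is monotone, hence has at most one real root.
A hyperbolic polynomial with a single real root `a` is `c (X - a)ⁿ`, whose derivative
`n c (X - a)ⁿ⁻¹` vanishes at most at `a`; but `P'` vanishes at both `1` and `4`.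
-/

open Polynomial

namespace Polynomial

theorem setOf_isRoot_subsingleton_of_monotone {P : ℝ[X]} (hP : P ≠ 0)
    (hmono : Monotone fun x => P.eval x) : {x | P.IsRoot x}.Subsingleton := by
  intro a ha b hb
  by_contra hne
  wlog hab : a < b generalizing a b
  · exact this hb ha (Ne.symm hne) ((not_lt.1 hab).lt_of_ne' hne)
  -- A monotone function vanishing at `a < b` vanishes on all of `[a, b]`.
  have hIcc : Set.Icc a b ⊆ {x | P.IsRoot x} := fun x hx => by
    have := hmono hx.1
    have := hmono hx.2
    simp only [Set.mem_ofPred_eq, IsRoot.def] at ha hb ⊢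
    linarith
  exact hP (eq_zero_of_infinite_isRoot P ((Set.Icc_infinite hab).mono hIcc))

theorem eq_of_isRoot_derivative_C_mul_X_sub_C_pow {c a x : ℝ} {n : ℕ}
    (hne : derivative (C c * (X - C a) ^ n) ≠ 0)
    (hx : (derivative (C c * (X - C a) ^ n)).IsRoot x) : x = a := by
  rw [derivative_C_mul, derivative_X_sub_C_pow] at hne hx
  have hcn : c * n ≠ 0 := fun h => hne (by
    rcases mul_eq_zero.1 h with h | h <;> simp_all)
  have hx' : c * n * (x - a) ^ (n - 1) = 0 := by simpa [mul_assoc] using hx.eq_zero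
  exact sub_eq_zero.1 (eq_zero_of_pow_eq_zero ((mul_eq_zero.1 hx').resolve_left hcn))

end Polynomial

theorem Hyperbolic.exists_eq_C_mul_X_sub_C_pow {P : ℝ[X]} (hP : Hyperbolic P)
    (hroots : {x | P.IsRoot x}.Subsingleton) :
    ∃ a, P = C P.leadingCoeff * (X - C a) ^ P.natDegree := by
  set Q := P.map (algebraMap ℝ ℂ)
  have hreal : ∀ z ∈ Q.roots, z = z.re ∧ P.IsRoot z.re := by
    intro z hz
    have hz_eq : z = z.re := Complex.ext rfl (by simp [hP z hz])
    refine ⟨hz_eq, ?_⟩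
    have := (isRoot_of_mem_roots hz).eq_zero
    rw [hz_eq, eval_map_algebraMap, ← Complex.coe_algebraMap, aeval_algebraMap_apply] at this
    exact (algebraMap ℝ ℂ).injective (this.trans (map_zero _).symm)
  obtain ⟨a, ha⟩ : ∃ a : ℝ, ∀ z ∈ Q.roots, z = a := by
    rcases Q.roots.empty_or_exists_mem with h | ⟨z₀, hz₀⟩
    · exact ⟨0, by simp [h]⟩
    · refine ⟨z₀.re, fun z hz => ?_⟩
      rw [(hreal z hz).1, hroots (hreal z hz).2 (hreal z₀ hz₀).2]
  have hsplits : Q.Splits := IsAlgClosed.splits Q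
  have hQroots : Q.roots = Multiset.replicate P.natDegree (a : ℂ) := by
    rw [Multiset.eq_replicate, ← natDegree_map (algebraMap ℝ ℂ), ← splits_iff_card_roots.1 hsplits]
    exact ⟨rfl, ha⟩
  refine ⟨a, map_injective (algebraMap ℝ ℂ) (RingHom.injective _) ?_⟩
  have := hsplits.eq_prod_roots
  rw [hQroots, Multiset.map_replicate, Multiset.prod_replicate, leadingCoeff_map] at this
  simpa using this

theorem stmt_13 :
    ¬ ∃ P : Polynomial ℝ,
        derivative P = (X - C 1) ^ 2 * (X - C 4) ^ 2 ∧ Hyperbolic P := by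
  rintro ⟨P, hP, hyp⟩
  have hP'ne : derivative P ≠ 0 := fun h => by simpa [hP] using congrArg (eval 0) h
  have hPne : P ≠ 0 := fun h => hP'ne (by simp [h])
  have hmono : Monotone fun x => P.eval x :=
    monotone_of_deriv_nonneg P.differentiable fun x => by
      rw [Polynomial.deriv, hP]
      simp only [eval_mul, eval_pow, eval_sub, eval_X, eval_C]
      positivity
  obtain ⟨a, ha⟩ := hyp.exists_eq_C_mul_X_sub_C_pow (setOf_isRoot_subsingleton_of_monotone hPne hmono)
  have h1 : (derivative P).IsRoot 1 := by simp [hP]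
  have h4 : (derivative P).IsRoot 4 := by simp [hP]
  rw [ha] at hP'ne h1 h4
  have h14 := (eq_of_isRoot_derivative_C_mul_X_sub_C_pow hP'ne h1).trans
    (eq_of_isRoot_derivative_C_mul_X_sub_C_pow hP'ne h4).symm
  norm_num at h14
end
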